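/- The number of independent sets of size k ≥ 1 in a cycle graph on L ≥ 3 vertices equals (L/(L-k))·C(L-k, k). -/

import Mathlib

/-!
Splitting on whether a vertex is used is a deletion–link recursion for the independence complex.
On the path with `m` vertices, applied at an end vertex, it is Pascal's rule, so the path has
`C(m + 1 - k, k)` independent `k`-sets. Applied at the vertex `0` of the cycle `C_L`, it leaves the
paths on `L - 1` and `L - 3` vertices, so `C_L` has `C(L - k, k) + C(L - k - 1, k - 1)` of them, and
`(n + 1) C(n, j) = (j + 1) C(n + 1, j + 1)` turns `(L - k)` times this sum into `L C(L - k, k)`.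
-/

/-- The independence complex of the cycle graph on `L` vertices `0, …, L-1`. -/
def cycleIndep (L : ℕ) : Finset (Finset ℕ) :=
  (Finset.range L).powerset.filter (fun σ => ∀ i ∈ σ, (i + 1) % L ∉ σ)

open Finset

lemma card_filter_card_succ_eq_add {α : Type*} [DecidableEq α] {S T U : Finset (Finset α)}
    {v : α} (hT : ∀ σ, σ ∈ T ↔ v ∉ σ ∧ σ ∈ S) (hU : ∀ τ, τ ∈ U ↔ v ∉ τ ∧ insert v τ ∈ S)
    (k : ℕ) : #{σ ∈ S | #σ = k + 1} = #{σ ∈ T | #σ = k + 1} + #{τ ∈ U | #τ = k} := by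
  rw [← card_filter_add_card_filter_not (s := {σ ∈ S | #σ = k + 1}) (v ∉ ·),
    filter_filter, filter_filter]
  congr 1
  · congr 1
    ext σ
    simp only [mem_filter, hT]
    tauto
  · refine card_nbij' (·.erase v) (insert v) ?_ ?_ ?_ ?_ <;>
      intro σ hσ <;> simp only [coe_filter, Set.mem_ofPred_eq, not_not, hU] at hσ ⊢ <;>
      grind [insert_erase]

def pathIndep (a m : ℕ) : Finset (Finset ℕ) :=
  {σ ∈ (Ico a (a + m)).powerset | ∀ i ∈ σ, i + 1 ∉ σ}

lemma mem_pathIndep {a m : ℕ} {σ : Finset ℕ} :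
    σ ∈ pathIndep a m ↔ (∀ i ∈ σ, a ≤ i ∧ i < a + m) ∧ ∀ i ∈ σ, i + 1 ∉ σ := by
  simp [pathIndep, subset_iff]

lemma pathIndep_of_le_one {a m : ℕ} (hm : m ≤ 1) : pathIndep a m = (Ico a (a + m)).powerset :=
  filter_true_of_mem fun σ hσ i hi hi1 => by
    have := mem_Ico.1 (mem_powerset.1 hσ hi)
    have := mem_Ico.1 (mem_powerset.1 hσ hi1)
    omega

lemma card_filter_pathIndep_succ_succ (a m k : ℕ) :
    #{σ ∈ pathIndep a (m + 2) | #σ = k + 1} =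
      #{σ ∈ pathIndep a (m + 1) | #σ = k + 1} + #{σ ∈ pathIndep a m | #σ = k} := by
  refine card_filter_card_succ_eq_add (v := a + m + 1) (fun σ => ?_) (fun τ => ?_) k
  · simp only [mem_pathIndep]
    grind
  · simp only [mem_pathIndep, mem_insert]
    grind

lemma card_filter_pathIndep : ∀ a m k, #{σ ∈ pathIndep a m | #σ = k} = (m + 1 - k).choose k
  | a, 0, k | a, 1, k => by
    rw [pathIndep_of_le_one (by omega), ← powersetCard_eq_filter, card_powersetCard]
    rcases k with _ | _ | k <;> simp [Nat.choose_eq_zero_of_lt]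
  | a, m + 2, 0 => by
    rw [Nat.choose_zero_right, card_eq_one]
    exact ⟨∅, by ext; simp +contextual [card_eq_zero, mem_pathIndep]⟩
  | a, m + 2, k + 1 => by
    rw [card_filter_pathIndep_succ_succ, card_filter_pathIndep a (m + 1),
      card_filter_pathIndep a m]
    rcases le_or_gt k (m + 1) with hk | hk
    · rw [show m + 2 + 1 - (k + 1) = m + 1 - k + 1 by omega,
        show m + 1 + 1 - (k + 1) = m + 1 - k by omega, Nat.choose_succ_succ', add_comm]
    · rw [Nat.choose_eq_zero_of_lt (by omega), Nat.choose_eq_zero_of_lt (by omega),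
        Nat.choose_eq_zero_of_lt (by omega)]

lemma add_one_mod_of_lt {i L : ℕ} (h : i < L) : (i + 1) % L = if i + 1 = L then 0 else i + 1 := by
  split_ifs with h'
  · simp [h']
  · exact Nat.mod_eq_of_lt (by omega)

lemma mem_cycleIndep_iff {L : ℕ} {σ : Finset ℕ} :
    σ ∈ cycleIndep L ↔ σ ∈ pathIndep 0 L ∧ ¬(L - 1 ∈ σ ∧ 0 ∈ σ) := by
  simp only [cycleIndep, mem_filter, mem_powerset, subset_iff, mem_range, mem_pathIndep]
  grind [add_one_mod_of_lt]

lemma card_filter_cycleIndep_succ {L : ℕ} (hL : 3 ≤ L) (k : ℕ) :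
    #{σ ∈ cycleIndep L | #σ = k + 1} = (L - (k + 1)).choose (k + 1) + (L - k - 2).choose k := by
  rw [card_filter_card_succ_eq_add (T := pathIndep 1 (L - 1)) (U := pathIndep 2 (L - 3)) (v := 0)
    (fun σ => ?_) (fun τ => ?_), card_filter_pathIndep, card_filter_pathIndep]
  · congr 2 <;> omega
  · simp only [mem_cycleIndep_iff, mem_pathIndep]
    grind
  · simp only [mem_cycleIndep_iff, mem_pathIndep, mem_insert]
    grind

lemma add_one_mul_choose_add_choose (n k : ℕ) :
    (n + 1) * ((n + 1).choose (k + 1) + n.choose k) = (n + k + 2) * (n + 1).choose (k + 1) := by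
  rw [mul_add, Nat.add_one_mul_choose_eq]
  ring

/-- The number of independent sets of size `k ≥ 1` in the cycle graph on `L ≥ 3`
vertices equals `(L/(L-k))·C(L-k, k)`; stated multiplicatively to avoid
division: `(L-k)` times the count equals `L·C(L-k,k)`. -/
theorem cycle_independent_sets_count (L k : ℕ) (hL : 3 ≤ L) (hk : 1 ≤ k) :
    (L - k) * ((cycleIndep L).filter (fun σ => σ.card = k)).card =
      L * (L - k).choose k := by
  obtain ⟨k, rfl⟩ := Nat.exists_eq_add_of_le' hk
  rw [card_filter_cycleIndep_succ hL]
  obtain hLk | ⟨n, rfl⟩ : L ≤ k + 1 ∨ ∃ n, L = n + k + 2 :=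
    (le_or_gt L (k + 1)).imp_right fun h => ⟨L - k - 2, by omega⟩
  · simp [Nat.sub_eq_zero_of_le hLk]
  · rw [show n + k + 2 - (k + 1) = n + 1 by omega, show n + k + 2 - k - 2 = n by omega,
      add_one_mul_choose_add_choose]
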